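/- Completeness of guard translation, non-strict-upper case: if ν corresponds with (r, α, t), e ∈ ℕ, and either (ι(r,α) = MORE and t < e) or (ι(r,α) ≠ MORE and t ≤ e), then ν(x_p) ≤ e. -/
import Mathlib


inductive Iota | LESS | MORE | EXACT
deriving DecidableEq

/-- Completeness of the guard translation, non-strict-upper case: if either
`ι = MORE` and `t < e`, or `ι ≠ MORE` and `t ≤ e`, then `ν(x_p) ≤ e`. -/
theorem guard_translation_complete_nonstrict (ι : Iota) (t : ℕ) (νp : ℝ)
    (hfloor : ⌊νp⌋ + (if ι = .LESS then 1 else 0) = (t : ℤ))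
    (hnat : (∃ n : ℕ, νp = n) ↔ ι = .EXACT)
    (e : ℕ)
    (h : (ι = .MORE ∧ t < e) ∨ (ι ≠ .MORE ∧ t ≤ e)) :
    νp ≤ e := by
  have hlt := Int.lt_floor_add_one νp
  cases ι with
  | LESS =>
      simp at hfloor
      rcases h with ⟨h1,_⟩|⟨_,h2⟩
      · simp at h1
      · have : νp < (t:ℝ) := by
          have : ((⌊νp⌋:ℝ) + 1 : ℝ) = (t:ℝ) := by exact_mod_cast hfloor
          linarith
        have : (t:ℝ) ≤ (e:ℝ) := by exact_mod_cast h2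
        linarith
  | MORE =>
      simp at hfloor
      rcases h with ⟨_,h1⟩|⟨h2,_⟩
      · have : ((⌊νp⌋:ℝ)) = (t:ℝ) := by exact_mod_cast hfloor
        have : (t:ℝ) + 1 ≤ (e:ℝ) := by exact_mod_cast h1
        linarith
      · simp at h2
  | EXACT =>
      simp at hfloor
      obtain ⟨n, hn⟩ := hnat.mpr rfl
      have hte : t ≤ e := by rcases h with ⟨h1,_⟩|⟨_,h2⟩; exacts [absurd h1 (by simp), h2]
      have : νp = (t:ℝ) := by
        subst hn
        have : (n:ℤ) = t := by simpa using hfloor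
        exact_mod_cast this
      rw [this]; exact_mod_cast hte
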